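/- A connected signed graph is balanced if and only if its Gremban expansion is disconnected. -/

import Mathlib

/-- A signed graph: a simple graph together with a symmetric `±1`-valued sign function
on its edges. -/
structure SignedGraph (V : Type*) where
  G : SimpleGraph V
  sign : V → V → ℤ
  sign_symm : ∀ u v, sign u v = sign v u
  sign_pm : ∀ u v, G.Adj u v → sign u v = 1 ∨ sign u v = -1

namespace SignedGraph

variable {V : Type*} (S : SignedGraph V)

/-- The Gremban expansion of a signed graph: each vertex `v` is doubled into the two
polarities `(v, true)` (positive) and `(v, false)` (negative); a positive edge lifts to
two edges between equal polarities, and a negative edge to two edges between opposite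
polarities. -/
def gremban : SimpleGraph (V × Bool) where
  Adj x y := S.G.Adj x.1 y.1 ∧ ((x.2 = y.2) ↔ S.sign x.1 y.1 = 1)
  symm := ⟨by
    rintro ⟨u, a⟩ ⟨v, b⟩ ⟨h, hs⟩
    refine ⟨h.symm, ?_⟩
    rw [S.sign_symm v u, eq_comm]
    exact hs⟩
  loopless := ⟨by
    rintro ⟨u, a⟩ ⟨h, _⟩
    exact S.G.irrefl h⟩

/-- The Gremban involution, swapping the two polarities of every vertex. -/
def eta : V × Bool → V × Bool := fun x => (x.1, !x.2)

end SignedGraph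

open SignedGraph

/-- A signed graph is balanced if its vertex set admits a bipartition such that all edges
within a part are positive and all edges between the parts are negative. -/
def SignedGraph.Balanced {V : Type*} (S : SignedGraph V) : Prop :=
  ∃ U : Set V, ∀ u v, S.G.Adj u v → (S.sign u v = 1 ↔ (u ∈ U ↔ v ∈ U))

/-!
A balancing bipartition is the same as a polarity `f v` for every vertex such that each edge
`uv` lifts to an edge between `(u, f u)` and `(v, f v)` in the expansion. The graph of such an
`f` is then closed under adjacency in the expansion but misses `(v, !f v)`, so the expansion is
disconnected. Conversely, walks of the signed graph lift to the expansion, so when the signed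
graph is connected the component of any vertex `x` meets every fibre. If that component misses
`eta x`, the swap symmetry shows that it meets each fibre exactly once, and the polarity it picks
in each fibre balances the graph.
-/

namespace SignedGraph

variable {V : Type*} (S : SignedGraph V)

def etaHom : S.gremban →g S.gremban where
  toFun := eta
  map_rel' := by
    rintro ⟨u, a⟩ ⟨v, b⟩ ⟨huv, hs⟩
    exact ⟨huv, by simpa [eta] using hs⟩

lemma gremban_adj_of_adj {u v : V} (huv : S.G.Adj u v) (a : Bool) :
    S.gremban.Adj (u, a) (v, if S.sign u v = 1 then a else !a) := by
  refine ⟨huv, ?_⟩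
  rcases S.sign_pm u v huv with hs | hs <;> simp [hs]

lemma exists_gremban_reachable_of_reachable {u v : V} (h : S.G.Reachable u v) (a : Bool) :
    ∃ b, S.gremban.Reachable (u, a) (v, b) := by
  obtain ⟨p⟩ := h
  induction p generalizing a with
  | nil => exact ⟨a, .rfl⟩
  | cons huw _ ih =>
    obtain ⟨b, hb⟩ := ih _
    exact ⟨b, (S.gremban_adj_of_adj huw a).reachable.trans hb⟩

lemma balanced_iff_exists_gremban_lift :
    S.Balanced ↔ ∃ f : V → Bool, ∀ u v, S.G.Adj u v → S.gremban.Adj (u, f u) (v, f v) := by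
  classical
  constructor
  · rintro ⟨U, hU⟩
    refine ⟨fun v => decide (v ∈ U), fun u v huv => ⟨huv, ?_⟩⟩
    rw [hU u v huv, decide_eq_decide]
  · rintro ⟨f, hf⟩
    refine ⟨{v | f v = true}, fun u v huv => ?_⟩
    rw [← (hf u v huv).2, Bool.eq_iff_iff]
    rfl

lemma not_gremban_connected_of_balanced (hb : S.Balanced) : ¬S.gremban.Connected := by
  obtain ⟨f, hf⟩ := S.balanced_iff_exists_gremban_lift.mp hb
  intro hcon
  obtain ⟨⟨v, -⟩⟩ := hcon.nonempty
  obtain ⟨p⟩ := hcon.preconnected (v, f v) (v, !f v)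
  obtain ⟨⟨⟨⟨u, a⟩, ⟨w, b⟩⟩, huw, hs⟩, -, hu, hw⟩ :=
    p.exists_boundary_dart {x | x.2 = f x.1} rfl (by simp)
  have hab : a = b ↔ f u = f w := hs.trans (hf u w huw).2.symm
  have bool_transfer : ∀ a b c d : Bool, (a = b ↔ c = d) → a = c → b = d := by decide
  exact hw (bool_transfer a b (f u) (f w) hab hu)

lemma gremban_connected_of_reachable_eta (hconn : S.G.Connected) {x : V × Bool}
    (hx : S.gremban.Reachable x (eta x)) : S.gremban.Connected := by
  refine S.gremban.connected_iff_exists_forall_reachable.mpr ⟨x, fun y => ?_⟩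
  obtain ⟨w, c⟩ := y
  obtain ⟨b, hb⟩ := S.exists_gremban_reachable_of_reachable (hconn.preconnected x.1 w) x.2
  by_cases hbc : b = c
  · exact hbc ▸ hb
  · obtain rfl : c = !b := Bool.eq_not.mpr (Ne.symm hbc)
    exact hx.trans (hb.map S.etaHom)

lemma balanced_of_not_reachable_eta (hconn : S.G.Connected) {x : V × Bool}
    (hx : ¬S.gremban.Reachable x (eta x)) : S.Balanced := by
  classical
  set f : V → Bool := fun v => decide (S.gremban.Reachable x (v, true))
  have reachable_iff (v : V) (b : Bool) : S.gremban.Reachable x (v, b) ↔ f v = b := by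
    obtain ⟨c, hc⟩ := S.exists_gremban_reachable_of_reachable (hconn.preconnected x.1 v) x.2
    have not_both : ¬(S.gremban.Reachable x (v, c) ∧ S.gremban.Reachable x (v, !c)) :=
      fun ⟨h, h'⟩ => hx (h'.trans (h.map S.etaHom).symm)
    cases b <;> cases c <;> simp_all [f]
  refine S.balanced_iff_exists_gremban_lift.mpr ⟨f, fun u v huv => ?_⟩
  have hadj := S.gremban_adj_of_adj huv (f u)
  have hfv := (reachable_iff v _).mp (((reachable_iff u (f u)).mpr rfl).trans hadj.reachable)
  rwa [← hfv] at hadj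

end SignedGraph

/-- A connected signed graph is balanced if and only if its Gremban expansion is
disconnected. -/
theorem balanced_iff_gremban_disconnected {V : Type*} (S : SignedGraph V)
    (hconn : S.G.Connected) :
    S.Balanced ↔ ¬S.gremban.Connected := by
  refine ⟨S.not_gremban_connected_of_balanced, fun hdis => ?_⟩
  obtain ⟨v⟩ := hconn.nonempty
  exact S.balanced_of_not_reachable_eta hconn (x := (v, true))
    fun hv => hdis (S.gremban_connected_of_reachable_eta hconn hv)
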